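/- Suppose for each p ≥ 3: V = δ₀ - X is independent of X, V is spherically symmetric and absolutely continuous, ‖X - δ‖/‖V‖ = o(p^{1/2}) in probability, and σ^{-2}‖X - δ‖·‖V‖ = o(p^{3/2}) in probability, as p → ∞. Then Pr_δ[‖δ̂⁺_JS(X; δ₀) - δ‖ > ‖X - δ‖] → 1 as p → ∞. -/

import Mathlib

open MeasureTheory ProbabilityTheory Filter
open scoped ENNReal Topology RealInnerProductSpace

/-!
Write `W = X - δ` and `V = δ₀ - X`. The estimator moves `X` by `t • V` with
`t = min (σ²(p-2)/‖V‖²) 1 > 0`, so it is not worse than `X` only if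
`2⟪W, V⟫ + min (σ²(p-2)) ‖V‖² ≤ 0` (the ball and the halfspace of the improvement region).
Unless `‖W‖/‖V‖ ≥ r√p` or `‖W‖‖V‖/σ² ≥ r p^{3/2}` (events of vanishing probability by
hypothesis), this forces `|cos ∠(W, V)| > 1/(6r√p)`.
As `V` is spherically symmetric and independent of `W`, `cos² ∠(W, V)` has mean `1/p`, so by
Markov's inequality that spherical cap has probability at most `36 r²`.
-/

/-- The plus-rule (positive-part) James–Stein estimator. -/
noncomputable def jsPlus {p : ℕ} (σ : ℝ) (x δ₀ : EuclideanSpace ℝ (Fin p)) :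
    EuclideanSpace ℝ (Fin p) :=
  (max (1 - σ ^ 2 * ((p : ℝ) - 2) / ‖x - δ₀‖ ^ 2) 0) • (x - δ₀) + δ₀

section SphericalSymmetry

variable {E : Type*} [NormedAddCommGroup E] [InnerProductSpace ℝ E] [FiniteDimensional ℝ E]
  [MeasurableSpace E] [BorelSpace E] {μ : Measure E}

theorem measurable_ofReal_inner_sq_div_norm_sq (e : E) :
    Measurable fun v : E => ENNReal.ofReal (⟪e, v⟫ ^ 2 / ‖v‖ ^ 2) := by
  fun_prop

theorem lintegral_inner_sq_div_norm_sq_congr (hμ : ∀ g : E ≃ₗᵢ[ℝ] E, μ.map g = μ) {e e' : E}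
    (h : ‖e‖ = ‖e'‖) :
    ∫⁻ v, ENNReal.ofReal (⟪e, v⟫ ^ 2 / ‖v‖ ^ 2) ∂μ
      = ∫⁻ v, ENNReal.ofReal (⟪e', v⟫ ^ 2 / ‖v‖ ^ 2) ∂μ := by
  set g := (ℝ ∙ (e - e'))ᗮ.reflection
  have hg : ∀ v, ⟪e, g v⟫ = ⟪e', v⟫ := fun v => by
    rw [← Submodule.reflection_sub h, ← g.inner_map_map, Submodule.reflection_reflection]
  calc _ = ∫⁻ v, ENNReal.ofReal (⟪e, v⟫ ^ 2 / ‖v‖ ^ 2) ∂(μ.map g) := by rw [hμ g]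
    _ = _ := by
      rw [lintegral_map (measurable_ofReal_inner_sq_div_norm_sq e) g.continuous.measurable]
      simp only [hg, g.norm_map]

theorem lintegral_inner_sq_div_norm_sq [IsProbabilityMeasure μ]
    (hμ : ∀ g : E ≃ₗᵢ[ℝ] E, μ.map g = μ) (h0 : μ {0} = 0) {e : E} (he : ‖e‖ = 1) :
    ∫⁻ v, ENNReal.ofReal (⟪e, v⟫ ^ 2 / ‖v‖ ^ 2) ∂μ = (Module.finrank ℝ E : ℝ≥0∞)⁻¹ := by
  set b := stdOrthonormalBasis ℝ E
  have hsum : ∀ᵐ v ∂μ, ∑ i, ENNReal.ofReal (⟪b i, v⟫ ^ 2 / ‖v‖ ^ 2) = 1 := by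
    filter_upwards [measure_eq_zero_iff_ae_notMem.mp h0] with v hv
    rw [← ENNReal.ofReal_sum_of_nonneg (fun i _ => by positivity), ← Finset.sum_div,
      b.sum_sq_inner_right, div_self (by simpa using hv), ENNReal.ofReal_one]
  refine ENNReal.eq_inv_of_mul_eq_one_left ?_
  calc _ = ∑ _i : Fin (Module.finrank ℝ E), ∫⁻ v, ENNReal.ofReal (⟪e, v⟫ ^ 2 / ‖v‖ ^ 2) ∂μ :=
        by simp [mul_comm]
    _ = ∑ i, ∫⁻ v, ENNReal.ofReal (⟪b i, v⟫ ^ 2 / ‖v‖ ^ 2) ∂μ :=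
        Finset.sum_congr rfl fun i _ =>
          lintegral_inner_sq_div_norm_sq_congr hμ (he.trans (b.orthonormal.1 i).symm)
    _ = 1 := by
      rw [← lintegral_finsetSum _ fun i _ => measurable_ofReal_inner_sq_div_norm_sq _,
        lintegral_congr_ae hsum, lintegral_one, measure_univ]

theorem measure_norm_mul_norm_lt_mul_abs_inner_le [IsProbabilityMeasure μ]
    (hμ : ∀ g : E ≃ₗᵢ[ℝ] E, μ.map g = μ) (h0 : μ {0} = 0) (w : E) (κ : ℝ) :
    μ {v | ‖w‖ * ‖v‖ < κ * |⟪w, v⟫|} ≤ ENNReal.ofReal (κ ^ 2 / Module.finrank ℝ E) := by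
  rcases eq_or_ne w 0 with rfl | hw
  · simp
  have : Nontrivial E := ⟨⟨w, 0, hw⟩⟩
  have hw' : 0 < ‖w‖ := norm_pos_iff.mpr hw
  set e := ‖w‖⁻¹ • w
  have he : ‖e‖ = 1 := by rw [norm_smul, norm_inv, norm_norm, inv_mul_cancel₀ hw'.ne']
  set f := fun v : E => ENNReal.ofReal (κ ^ 2) * ENNReal.ofReal (⟪e, v⟫ ^ 2 / ‖v‖ ^ 2)
  have hsub : {v | ‖w‖ * ‖v‖ < κ * |⟪w, v⟫|} ⊆ {v | 1 ≤ f v} := fun v hv => by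
    have hv0 : v ≠ 0 := by rintro rfl; simp at hv
    have hsq : (‖w‖ * ‖v‖) ^ 2 < κ ^ 2 * ⟪w, v⟫ ^ 2 := by
      simpa [mul_pow, sq_abs] using
        pow_lt_pow_left₀ (show ‖w‖ * ‖v‖ < κ * |⟪w, v⟫| from hv) (by positivity) two_ne_zero
    have hcos : 1 ≤ κ ^ 2 * (⟪e, v⟫ ^ 2 / ‖v‖ ^ 2) := by
      rw [real_inner_smul_left, mul_pow, inv_pow, ← mul_div_assoc, le_div_iff₀ (by positivity)]
      field_simp
      linarith
    simpa [f, ← ENNReal.ofReal_mul (sq_nonneg κ)] using ENNReal.ofReal_le_ofReal hcos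
  calc μ {v | ‖w‖ * ‖v‖ < κ * |⟪w, v⟫|} ≤ 1 * μ {v | 1 ≤ f v} := by
        rw [one_mul]; exact measure_mono hsub
    _ ≤ ∫⁻ v, f v ∂μ := mul_meas_ge_le_lintegral₀
        ((measurable_ofReal_inner_sq_div_norm_sq e).const_mul _).aemeasurable 1
    _ = ENNReal.ofReal (κ ^ 2 / Module.finrank ℝ E) := by
      rw [lintegral_const_mul _ (measurable_ofReal_inner_sq_div_norm_sq e),
        lintegral_inner_sq_div_norm_sq hμ h0 he,
        ENNReal.ofReal_div_of_pos (Nat.cast_pos.mpr Module.finrank_pos), ENNReal.ofReal_natCast,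
        div_eq_mul_inv]

theorem measure_norm_mul_norm_lt_mul_abs_inner_le_of_indepFun {Ω : Type*} [MeasurableSpace Ω]
    {P : Measure Ω} [IsProbabilityMeasure P] {W V : Ω → E} (hW : Measurable W)
    (hV : Measurable V) (hWV : IndepFun W V P)
    (hsym : ∀ g : E ≃ₗᵢ[ℝ] E, P.map (fun ω => g (V ω)) = P.map V) (h0 : P.map V {0} = 0)
    (κ : ℝ) :
    P {ω | ‖W ω‖ * ‖V ω‖ < κ * |⟪W ω, V ω⟫|} ≤ ENNReal.ofReal (κ ^ 2 / Module.finrank ℝ E) := by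
  have : IsProbabilityMeasure (P.map V) := Measure.isProbabilityMeasure_map hV.aemeasurable
  have : IsProbabilityMeasure (P.map W) := Measure.isProbabilityMeasure_map hW.aemeasurable
  have hμ (g : E ≃ₗᵢ[ℝ] E) : (P.map V).map g = P.map V := by
    rw [Measure.map_map g.continuous.measurable hV]; exact hsym g
  set S := {q : E × E | ‖q.1‖ * ‖q.2‖ < κ * |⟪q.1, q.2⟫|}
  have hS : MeasurableSet S := measurableSet_lt (by fun_prop) (by fun_prop)
  calc P {ω | ‖W ω‖ * ‖V ω‖ < κ * |⟪W ω, V ω⟫|} = P.map (fun ω => (W ω, V ω)) S :=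
        (Measure.map_apply (hW.prodMk hV) hS).symm
    _ = ∫⁻ w, P.map V (Prod.mk w ⁻¹' S) ∂(P.map W) := by
      rw [(indepFun_iff_map_prod_eq_prod_map_map hW.aemeasurable hV.aemeasurable).mp hWV,
        Measure.prod_apply hS]
    _ ≤ ∫⁻ _, ENNReal.ofReal (κ ^ 2 / Module.finrank ℝ E) ∂(P.map W) :=
        lintegral_mono fun w => measure_norm_mul_norm_lt_mul_abs_inner_le hμ h0 w κ
    _ = ENNReal.ofReal (κ ^ 2 / Module.finrank ℝ E) := by simp

end SphericalSymmetry

section ImprovementRegion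

variable {E : Type*} [NormedAddCommGroup E] [InnerProductSpace ℝ E]

theorem two_inner_add_mul_norm_sq_nonpos {w v : E} {t : ℝ} (ht : 0 < t)
    (h : ‖w + t • v‖ ≤ ‖w‖) : 2 * ⟪w, v⟫ + t * ‖v‖ ^ 2 ≤ 0 := by
  have hsq := pow_le_pow_left₀ (norm_nonneg _) h 2
  rw [norm_add_sq_real, real_inner_smul_right, norm_smul, Real.norm_eq_abs, mul_pow, sq_abs] at hsq
  nlinarith

theorem norm_mul_norm_lt_mul_abs_inner {w v : E} {σ n ρ : ℝ} (hv : v ≠ 0) (hσ : 0 < σ)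
    (hn : 3 ≤ n) (hρ₁ : ‖w‖ / ‖v‖ < ρ) (hρ₂ : ‖w‖ * ‖v‖ / σ ^ 2 < ρ * n)
    (h : 2 * ⟪w, v⟫ + min (σ ^ 2 * (n - 2)) (‖v‖ ^ 2) ≤ 0) :
    ‖w‖ * ‖v‖ < 6 * ρ * |⟪w, v⟫| := by
  have hv' : 0 < ‖v‖ := norm_pos_iff.mpr hv
  have hρ : 0 < ρ := (div_nonneg (norm_nonneg w) hv'.le).trans_lt hρ₁
  rw [div_lt_iff₀ hv'] at hρ₁
  rw [div_lt_iff₀ (by positivity)] at hρ₂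
  have hball : ‖w‖ * ‖v‖ < 3 * ρ * ‖v‖ ^ 2 := by nlinarith
  have hhalf : ‖w‖ * ‖v‖ < 3 * ρ * (σ ^ 2 * (n - 2)) := by
    nlinarith [mul_nonneg (mul_pos hρ (pow_pos hσ 2)).le (by linarith : (0 : ℝ) ≤ 2 * n - 6)]
  calc ‖w‖ * ‖v‖ < 3 * ρ * min (σ ^ 2 * (n - 2)) (‖v‖ ^ 2) := by
        rw [mul_min_of_nonneg _ _ (by positivity)]; exact lt_min hhalf hball
    _ ≤ 3 * ρ * (2 * |⟪w, v⟫|) := by gcongr; linarith [neg_le_abs ⟪w, v⟫]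
    _ = 6 * ρ * |⟪w, v⟫| := by ring

end ImprovementRegion

theorem jsPlus_sub {p : ℕ} (σ : ℝ) (x δ₀ δ : EuclideanSpace ℝ (Fin p)) :
    jsPlus σ x δ₀ - δ
      = (x - δ) + min (σ ^ 2 * ((p : ℝ) - 2) / ‖δ₀ - x‖ ^ 2) 1 • (δ₀ - x) := by
  rw [jsPlus, norm_sub_rev, ← sub_sub_cancel 1 (min _ _), ← max_sub_sub_left, sub_self,
    sub_smul, one_smul, smul_sub, smul_sub]
  abel

theorem norm_mul_norm_lt_mul_abs_inner_of_norm_jsPlus_sub_le {p : ℕ} (hp : 3 ≤ p) {σ ρ : ℝ}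
    (hσ : 0 < σ) {x δ₀ δ : EuclideanSpace ℝ (Fin p)} (hv : δ₀ - x ≠ 0)
    (hρ₁ : ‖x - δ‖ / ‖δ₀ - x‖ < ρ) (hρ₂ : ‖x - δ‖ * ‖δ₀ - x‖ / σ ^ 2 < ρ * p)
    (h : ‖jsPlus σ x δ₀ - δ‖ ≤ ‖x - δ‖) :
    ‖x - δ‖ * ‖δ₀ - x‖ < 6 * ρ * |⟪x - δ, δ₀ - x⟫| := by
  have hn : (3 : ℝ) ≤ p := by exact_mod_cast hp
  have hv' : 0 < ‖δ₀ - x‖ ^ 2 := by positivity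
  set t := min (σ ^ 2 * ((p : ℝ) - 2) / ‖δ₀ - x‖ ^ 2) 1
  have ht : 0 < t := lt_min (div_pos (by nlinarith [sq_pos_of_pos hσ]) hv') one_pos
  have htv : t * ‖δ₀ - x‖ ^ 2 = min (σ ^ 2 * ((p : ℝ) - 2)) (‖δ₀ - x‖ ^ 2) := by
    rw [min_mul_of_nonneg _ _ hv'.le, div_mul_cancel₀ _ hv'.ne', one_mul]
  rw [jsPlus_sub] at h
  refine norm_mul_norm_lt_mul_abs_inner hv hσ hn hρ₁ hρ₂ ?_
  rw [← htv]
  exact two_inner_add_mul_norm_sq_nonpos ht h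

theorem measure_norm_jsPlus_sub_le_le {p : ℕ} (hp : 3 ≤ p) {Ω : Type*} [MeasurableSpace Ω]
    {P : Measure Ω} [IsProbabilityMeasure P] {X δ₀ : Ω → EuclideanSpace ℝ (Fin p)}
    (δ : EuclideanSpace ℝ (Fin p)) {σ : ℝ} (hσ : 0 < σ) (hmX : Measurable X)
    (hmδ₀ : Measurable δ₀) (hindep : IndepFun (fun ω => δ₀ ω - X ω) X P)
    (hsph : ∀ g : EuclideanSpace ℝ (Fin p) ≃ₗᵢ[ℝ] EuclideanSpace ℝ (Fin p),
      P.map (fun ω => g (δ₀ ω - X ω)) = P.map (fun ω => δ₀ ω - X ω))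
    (habs : P.map (fun ω => δ₀ ω - X ω) ≪ volume) (r : ℝ) :
    P {ω | ‖jsPlus σ (X ω) (δ₀ ω) - δ‖ ≤ ‖X ω - δ‖}
      ≤ P {ω | r * Real.sqrt p ≤ ‖X ω - δ‖ / ‖δ₀ ω - X ω‖}
        + P {ω | r * (p : ℝ) ^ ((3 : ℝ) / 2) ≤ ‖X ω - δ‖ * ‖δ₀ ω - X ω‖ / σ ^ 2}
        + ENNReal.ofReal (36 * r ^ 2) := by
  have hV : Measurable fun ω => δ₀ ω - X ω := hmδ₀.sub hmX
  have : Nonempty (Fin p) := ⟨⟨0, by omega⟩⟩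
  have h0 : P.map (fun ω => δ₀ ω - X ω) {0} = 0 := habs (measure_singleton 0)
  have hp32 : r * (p : ℝ) ^ ((3 : ℝ) / 2) = r * Real.sqrt p * p := by
    rw [Real.sqrt_eq_rpow, mul_assoc, ← Real.rpow_add_one (by positivity)]
    norm_num
  have hcap : P {ω | ‖X ω - δ‖ * ‖δ₀ ω - X ω‖
      < 6 * (r * Real.sqrt p) * |⟪X ω - δ, δ₀ ω - X ω⟫|} ≤ ENNReal.ofReal (36 * r ^ 2) := by
    refine (measure_norm_mul_norm_lt_mul_abs_inner_le_of_indepFun (hmX.sub_const δ) hV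
      (hindep.symm.comp (measurable_id.sub_const δ) measurable_id) hsph h0 _).trans_eq ?_
    rw [finrank_euclideanSpace_fin, mul_pow, mul_pow, Real.sq_sqrt (Nat.cast_nonneg p)]
    congr 1
    field_simp
    ring
  have hsub : {ω | ‖jsPlus σ (X ω) (δ₀ ω) - δ‖ ≤ ‖X ω - δ‖}
      ⊆ {ω | r * Real.sqrt p ≤ ‖X ω - δ‖ / ‖δ₀ ω - X ω‖}
        ∪ {ω | r * (p : ℝ) ^ ((3 : ℝ) / 2) ≤ ‖X ω - δ‖ * ‖δ₀ ω - X ω‖ / σ ^ 2}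
        ∪ (fun ω => δ₀ ω - X ω) ⁻¹' {0}
        ∪ {ω | ‖X ω - δ‖ * ‖δ₀ ω - X ω‖
            < 6 * (r * Real.sqrt p) * |⟪X ω - δ, δ₀ ω - X ω⟫|} := by
    intro ω h
    by_contra! hω
    simp only [Set.mem_union, Set.mem_ofPred_eq, Set.mem_preimage, Set.mem_singleton_iff,
      not_or, not_le, not_lt, hp32] at hω
    obtain ⟨⟨⟨hρ₁, hρ₂⟩, hv⟩, hcone⟩ := hω
    exact (norm_mul_norm_lt_mul_abs_inner_of_norm_jsPlus_sub_le hp hσ hv hρ₁ hρ₂ h).not_ge hcone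
  have hZ : P ((fun ω => δ₀ ω - X ω) ⁻¹' {0}) = 0 := by
    rw [← Measure.map_apply hV (measurableSet_singleton 0), h0]
  refine (measure_mono hsub).trans <| (measure_union_le _ _).trans <| add_le_add ?_ hcap
  calc _ ≤ _ := measure_union_le _ _
    _ ≤ _ := add_le_add_left (measure_union_le _ _) _
    _ = _ := by rw [hZ, add_zero]

theorem tendsto_measure_one_of_tendsto_measure_compl {ι : Type*} {l : Filter ι} {Ω : ι → Type*}
    [∀ i, MeasurableSpace (Ω i)] (P : ∀ i, Measure (Ω i)) [∀ i, IsProbabilityMeasure (P i)]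
    {s : ∀ i, Set (Ω i)} (h : Tendsto (fun i => P i (s i)ᶜ) l (𝓝 0)) :
    Tendsto (fun i => P i (s i)) l (𝓝 1) := by
  refine tendsto_of_tendsto_of_tendsto_of_le_of_le (g := fun i => 1 - P i (s i)ᶜ)
    (by simpa using ENNReal.Tendsto.sub tendsto_const_nhds h (Or.inl ENNReal.one_ne_top))
    tendsto_const_nhds (fun i => ?_) (fun i => prob_le_one)
  rw [tsub_le_iff_right, ← measure_univ (μ := P i), ← Set.union_compl_self (s i)]
  exact measure_union_le _ _

/-- the Reverse Stein Effect: If for each `p` the displacement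
`V = δ₀ - X` of the data-dependent target is independent of `X`, spherically symmetric
and absolutely continuous, with `‖X - δ‖/‖V‖ = o(p^{1/2})` and
`σ⁻²‖X - δ‖·‖V‖ = o(p^{3/2})` in probability, then
`Pr[‖δ̂⁺_JS(X; δ₀) - δ‖ > ‖X - δ‖] → 1` as `p → ∞`. -/
theorem reverse_stein_stmt19
    (Ω : ℕ → Type*) [∀ p, MeasureSpace (Ω p)]
    [∀ p, IsProbabilityMeasure (ℙ : Measure (Ω p))]
    (X δ₀ : ∀ p, Ω p → EuclideanSpace ℝ (Fin p))
    (δ : ∀ p, EuclideanSpace ℝ (Fin p)) (σ : ℕ → ℝ) (hσ : ∀ p, 0 < σ p)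
    (hmX : ∀ p, Measurable (X p)) (hmδ₀ : ∀ p, Measurable (δ₀ p))
    (hindep : ∀ p, IndepFun (fun ω => δ₀ p ω - X p ω) (X p) (ℙ : Measure (Ω p)))
    (hsph : ∀ p, ∀ g : EuclideanSpace ℝ (Fin p) ≃ₗᵢ[ℝ] EuclideanSpace ℝ (Fin p),
      Measure.map (fun ω => g (δ₀ p ω - X p ω)) (ℙ : Measure (Ω p))
        = Measure.map (fun ω => δ₀ p ω - X p ω) (ℙ : Measure (Ω p)))
    (habs : ∀ p, Measure.map (fun ω => δ₀ p ω - X p ω) (ℙ : Measure (Ω p)) ≪ volume)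
    (hsmall₁ : ∀ ε : ℝ, 0 < ε →
      Tendsto (fun p => (ℙ : Measure (Ω p))
          {ω | ε * Real.sqrt p ≤ ‖X p ω - δ p‖ / ‖δ₀ p ω - X p ω‖})
        atTop (𝓝 0))
    (hsmall₂ : ∀ ε : ℝ, 0 < ε →
      Tendsto (fun p => (ℙ : Measure (Ω p))
          {ω | ε * (p : ℝ) ^ ((3 : ℝ) / 2)
                ≤ ‖X p ω - δ p‖ * ‖δ₀ p ω - X p ω‖ / (σ p) ^ 2})
        atTop (𝓝 0)) :
    Tendsto (fun p => (ℙ : Measure (Ω p))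
        {ω | ‖X p ω - δ p‖ < ‖jsPlus (σ p) (X p ω) (δ₀ p ω) - δ p‖})
      atTop (𝓝 1) := by
  refine tendsto_measure_one_of_tendsto_measure_compl _ ?_
  simp only [Set.compl_ofPred, not_lt]
  rw [ENNReal.tendsto_nhds_zero]
  intro η hη
  obtain ⟨ε, -, hε, hεη⟩ := ENNReal.lt_iff_exists_real_btwn.mp (ENNReal.half_pos hη.ne')
  set r := Real.sqrt ε / 6
  have hr : 0 < r := by have := ENNReal.ofReal_pos.mp hε; positivity
  have hrε : 36 * r ^ 2 = ε := by
    rw [div_pow, Real.sq_sqrt (ENNReal.ofReal_pos.mp hε).le]; ring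
  have hsmall := (hsmall₁ r hr).add (hsmall₂ r hr)
  rw [add_zero] at hsmall
  filter_upwards [hsmall.eventually (ge_mem_nhds (ENNReal.half_pos hη.ne')),
    eventually_ge_atTop 3] with p hη₁ hp
  calc _ ≤ _ := measure_norm_jsPlus_sub_le_le hp (δ p) (hσ p) (hmX p) (hmδ₀ p) (hindep p)
        (hsph p) (habs p) r
    _ ≤ η / 2 + η / 2 := add_le_add hη₁ (hrε ▸ hεη.le)
    _ = η := ENNReal.add_halves η
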